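/- The crossing number of the complete bipartite graph K_{m,n} is at most ⌊n/2⌋·⌊(n-1)/2⌋·⌊m/2⌋·⌊(m-1)/2⌋. -/

import Mathlib

open SimpleGraph

/-- A drawing of a simple graph in the plane: vertices at distinct points, each
edge a simple continuous arc between its endpoints whose interior avoids all
vertex points, and any two distinct edges meeting in only finitely many points. -/
structure Drawing {V : Type*} (G : SimpleGraph V) where
  vert : V → ℝ × ℝ
  vert_inj : Function.Injective vert
  edge : Sym2 V → ℝ → ℝ × ℝ
  edge_cont : ∀ e ∈ G.edgeSet, ContinuousOn (edge e) (Set.Icc 0 1)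
  edge_inj : ∀ e ∈ G.edgeSet, Set.InjOn (edge e) (Set.Icc 0 1)
  edge_ends : ∀ u v : V, s(u, v) ∈ G.edgeSet →
    (edge s(u, v) 0 = vert u ∧ edge s(u, v) 1 = vert v) ∨
    (edge s(u, v) 0 = vert v ∧ edge s(u, v) 1 = vert u)
  edge_avoid : ∀ e ∈ G.edgeSet, ∀ t ∈ Set.Ioo (0 : ℝ) 1, ∀ w : V, edge e t ≠ vert w
  inter_finite : ∀ e ∈ G.edgeSet, ∀ f ∈ G.edgeSet, e ≠ f →
    {p : ℝ × ℝ | (∃ t ∈ Set.Ioo (0 : ℝ) 1, edge e t = p) ∧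
      (∃ t ∈ Set.Ioo (0 : ℝ) 1, edge f t = p)}.Finite

/-- The number of crossings of a drawing: interior intersection points of pairs
of distinct edges, with each unordered pair of edges counted once. -/
noncomputable def Drawing.crossings {V : Type*} {G : SimpleGraph V} (D : Drawing G) : ℕ :=
  Set.ncard {q : (Sym2 V × Sym2 V) × (ℝ × ℝ) |
    q.1.1 ∈ G.edgeSet ∧ q.1.2 ∈ G.edgeSet ∧ q.1.1 ≠ q.1.2 ∧
    (∃ t ∈ Set.Ioo (0 : ℝ) 1, D.edge q.1.1 t = q.2) ∧
    (∃ t ∈ Set.Ioo (0 : ℝ) 1, D.edge q.1.2 t = q.2)} / 2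

/-- The crossing number of a graph: the least number of crossings over all
drawings of the graph in the plane. -/
noncomputable def crossingNumber {V : Type*} (G : SimpleGraph V) : ℕ :=
  sInf {n : ℕ | ∃ D : Drawing G, D.crossings = n}

/-!
Zarankiewicz's drawing. Put the vertices of each class on a coordinate axis at the alternating
positions `1, -2, 3, -4, …` and draw every edge as a straight segment. The segments from
`(a, 0)` to `(0, b)` and from `(a', 0)` to `(0, b')` meet in at most one point, and only when
`a, a'` share a half-axis, `b, b'` share a half-axis and the nesting is reversed
(`|a| < |a'|` and `|b'| < |b|`, or the other way round). So every crossing comes from a pair of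
nested pairs, one on each axis, and `m` alternating points form `⌊m/2⌋⌊(m-1)/2⌋` nested pairs.
-/

theorem crossingNumber_le_crossings {V : Type*} {G : SimpleGraph V} (D : Drawing G) :
    crossingNumber G ≤ D.crossings :=
  Nat.sInf_le ⟨D, rfl⟩

namespace Drawing

variable {V : Type*} {G : SimpleGraph V}

def arc (D : Drawing G) (e : Sym2 V) : Set (ℝ × ℝ) := D.edge e '' Set.Ioo 0 1

theorem crossings_le_of_subsingleton (D : Drawing G) {S : Set (Sym2 V × Sym2 V)}
    (hS : S.Finite)
    (hsub : ∀ e ∈ G.edgeSet, ∀ f ∈ G.edgeSet, e ≠ f → (D.arc e ∩ D.arc f).Subsingleton)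
    (hmem : ∀ e ∈ G.edgeSet, ∀ f ∈ G.edgeSet, e ≠ f → (D.arc e ∩ D.arc f).Nonempty →
      (e, f) ∈ S) :
    D.crossings ≤ S.ncard / 2 := by
  refine Nat.div_le_div_right (Set.ncard_le_ncard_of_injOn Prod.fst ?_ ?_ hS)
  · rintro ⟨⟨e, f⟩, p⟩ ⟨he, hf, hef, hpe, hpf⟩
    exact hmem e he f hf hef ⟨p, hpe, hpf⟩
  · rintro ⟨⟨e, f⟩, p⟩ ⟨he, hf, hef, hpe, hpf⟩ ⟨ef', q⟩ ⟨-, -, -, hqe, hqf⟩ rfl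
    exact Prod.ext rfl (hsub e he f hf hef ⟨hpe, hpf⟩ ⟨hqe, hqf⟩)

end Drawing

def axisSegment (a b t : ℝ) : ℝ × ℝ := ((1 - t) * a, t * b)

theorem crossed_of_axisSegment_eq {a b a' b' c c' : ℝ} (ha : a ≠ 0) (hb : b ≠ 0)
    (hc : c ∈ Set.Ioo 0 1) (hc' : c' ∈ Set.Ioo 0 1)
    (h : axisSegment a b c = axisSegment a' b' c') (hne : (a, b) ≠ (a', b')) :
    0 < a * a' ∧ 0 < b * b' ∧ (|a| < |a'| ∧ |b'| < |b| ∨ |a'| < |a| ∧ |b| < |b'|) := by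
  obtain ⟨hc0, hc1⟩ := hc
  obtain ⟨hc0', hc1'⟩ := hc'
  obtain ⟨hx, hy⟩ := Prod.ext_iff.mp h
  simp only [axisSegment] at hx hy
  have ha' : a' ≠ 0 := by rintro rfl; simp [ha] at hx; linarith
  have hb' : b' ≠ 0 := by rintro rfl; simp [hb] at hy; linarith
  have hA : (1 - c) * |a| = (1 - c') * |a'| := by
    simpa [abs_mul, abs_of_pos (sub_pos.2 hc1), abs_of_pos (sub_pos.2 hc1')] using congrArg abs hx
  have hB : c * |b| = c' * |b'| := by
    simpa [abs_mul, abs_of_pos hc0, abs_of_pos hc0'] using congrArg abs hy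
  have haa : 0 < a * a' := by
    refine pos_of_mul_pos_right (a := 1 - c) ?_ (sub_pos.2 hc1).le
    rw [← mul_assoc, hx, mul_assoc]
    exact mul_pos (sub_pos.2 hc1') (mul_self_pos.2 ha')
  have hbb : 0 < b * b' := by
    refine pos_of_mul_pos_right (a := c) ?_ hc0.le
    rw [← mul_assoc, hy, mul_assoc]
    exact mul_pos hc0' (mul_self_pos.2 hb')
  refine ⟨haa, hbb, ?_⟩
  have := abs_pos.2 ha
  have := abs_pos.2 ha'
  have := abs_pos.2 hb
  have := abs_pos.2 hb'
  rcases lt_trichotomy |a| |a'| with hlt | heq | hgt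
  · have : c < c' := by nlinarith
    exact Or.inl ⟨hlt, by nlinarith⟩
  · have hcc : c = c' := by nlinarith
    have hbeq : |b| = |b'| := by subst hcc; exact mul_left_cancel₀ hc0.ne' hB
    have h1 : a = a' := (abs_eq_abs.mp heq).resolve_right fun h1 => by
      rw [h1] at haa; nlinarith [mul_self_pos.2 ha']
    have h2 : b = b' := (abs_eq_abs.mp hbeq).resolve_right fun h2 => by
      rw [h2] at hbb; nlinarith [mul_self_pos.2 hb']
    exact absurd (by rw [h1, h2]) hne
  · have : c' < c := by nlinarith
    exact Or.inr ⟨hgt, by nlinarith⟩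

theorem axisSegment_param_eq {a b a' b' c c' d d' : ℝ} (ha' : a' ≠ 0) (hb' : b' ≠ 0)
    (h : axisSegment a b c = axisSegment a' b' c') (h' : axisSegment a b d = axisSegment a' b' d')
    (hne : (a, b) ≠ (a', b')) : c = d := by
  obtain ⟨hx, hy⟩ := Prod.ext_iff.mp h
  obtain ⟨hx', hy'⟩ := Prod.ext_iff.mp h'
  simp only [axisSegment] at hx hy hx' hy'
  by_contra hcd
  have hδ : d' - c' = d - c := by
    have h1 : a' * ((d - c) - (d' - c') - ((d - c) * c' - c * (d' - c'))) = 0 := by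
      linear_combination (1 - c) * (hx - hx') - (d - c) * hx
    have h2 : b' * (c * (d' - c') - (d - c) * c') = 0 := by
      linear_combination (d - c) * hy - c * (hy' - hy)
    have := (mul_eq_zero.mp h1).resolve_left ha'
    have := (mul_eq_zero.mp h2).resolve_left hb'
    linarith
  have hdc : d - c ≠ 0 := sub_ne_zero.mpr (Ne.symm hcd)
  refine hne (Prod.ext (mul_left_cancel₀ hdc ?_) (mul_left_cancel₀ hdc ?_))
  · linear_combination hx - hx' + a' * hδ
  · linear_combination hy' - hy + b' * hδ

theorem axisSegment_inter_subsingleton {a b a' b' : ℝ} (ha' : a' ≠ 0) (hb' : b' ≠ 0)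
    (hne : (a, b) ≠ (a', b')) :
    (axisSegment a b '' Set.Ioo 0 1 ∩ axisSegment a' b' '' Set.Ioo 0 1).Subsingleton := by
  rintro _ ⟨⟨c, -, rfl⟩, c', -, h⟩ _ ⟨⟨d, -, rfl⟩, d', -, h'⟩
  rw [axisSegment_param_eq ha' hb' h.symm h'.symm hne]

section AxisDrawing

open Function Sum

variable {α β : Type*} {a : α → ℝ} {b : β → ℝ}

def axisVert (a : α → ℝ) (b : β → ℝ) : α ⊕ β → ℝ × ℝ :=
  Sum.elim (fun i => (a i, 0)) (fun j => (0, b j))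

/-- The endpoints of an edge `s(inl i, inr j)` sum to `(a i, b j)`, so the edge is drawn as
`axisSegment (a i) (b j)` whichever way round `Sym2` stores it. -/
def axisEdge (a : α → ℝ) (b : β → ℝ) : Sym2 (α ⊕ β) → ℝ → ℝ × ℝ :=
  Sym2.lift ⟨fun u v => axisSegment (axisVert a b u + axisVert a b v).1
    (axisVert a b u + axisVert a b v).2, fun u v => by simp only [add_comm]⟩

@[simp]
theorem axisEdge_mk (i : α) (j : β) : axisEdge a b s(inl i, inr j) = axisSegment (a i) (b j) := by
  simp [axisEdge, axisVert]

theorem axisVert_injective (ha : Injective a) (hb : Injective b) (ha0 : ∀ i, a i ≠ 0) :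
    Injective (axisVert a b) := by
  rintro (i | j) (i' | j') h <;> simp only [axisVert, elim_inl, elim_inr, Prod.mk.injEq] at h
  · rw [ha h.1]
  · exact absurd h.1 (ha0 i)
  · exact absurd h.1.symm (ha0 i')
  · rw [hb h.2]

theorem pair_ne_of_mk_ne (ha : Injective a) (hb : Injective b) {i i' : α} {j j' : β}
    (h : (s(inl i, inr j) : Sym2 (α ⊕ β)) ≠ s(inl i', inr j')) : (a i, b j) ≠ (a i', b j') := by
  intro hab
  obtain ⟨hi, hj⟩ := Prod.ext_iff.mp hab
  rw [ha hi, hb hj] at h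
  exact h rfl

def axisDrawing (ha : Injective a) (hb : Injective b) (ha0 : ∀ i, a i ≠ 0)
    (hb0 : ∀ j, b j ≠ 0) : Drawing (completeBipartiteGraph α β) where
  vert := axisVert a b
  vert_inj := axisVert_injective ha hb ha0
  edge := axisEdge a b
  edge_cont := by
    rw [edgeSet_completeBipartiteGraph, Set.forall_mem_range]
    rintro ⟨i, j⟩
    dsimp only
    rw [axisEdge_mk]
    exact Continuous.continuousOn (by unfold axisSegment; fun_prop)
  edge_inj := by
    rw [edgeSet_completeBipartiteGraph, Set.forall_mem_range]
    rintro ⟨i, j⟩ c - c' - h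
    dsimp only at h
    rw [axisEdge_mk] at h
    exact mul_right_cancel₀ (hb0 j) (Prod.ext_iff.mp h).2
  edge_ends := by
    rintro (i | j) (i' | j') h <;>
      simp [axisEdge, axisVert, axisSegment] at h ⊢
  edge_avoid := by
    rw [edgeSet_completeBipartiteGraph, Set.forall_mem_range]
    rintro ⟨i, j⟩ t ⟨ht0, ht1⟩ (k | k) h <;>
      simp only [axisEdge_mk, axisSegment, axisVert, elim_inl, elim_inr, Prod.mk.injEq] at h
    · exact mul_ne_zero ht0.ne' (hb0 j) h.2
    · exact mul_ne_zero (sub_pos.2 ht1).ne' (ha0 i) h.1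
  inter_finite := by
    rw [edgeSet_completeBipartiteGraph]
    rintro _ ⟨⟨i, j⟩, rfl⟩ _ ⟨⟨i', j'⟩, rfl⟩ hne
    dsimp only at hne ⊢
    simp only [axisEdge_mk]
    exact (axisSegment_inter_subsingleton (ha0 i') (hb0 j') (pair_ne_of_mk_ne ha hb hne)).finite

@[simp]
theorem axisDrawing_arc_mk (ha : Injective a) (hb : Injective b) (ha0 : ∀ i, a i ≠ 0)
    (hb0 : ∀ j, b j ≠ 0) (i : α) (j : β) :
    (axisDrawing ha hb ha0 hb0).arc s(inl i, inr j) = axisSegment (a i) (b j) '' Set.Ioo 0 1 :=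
  congrArg (· '' _) (axisEdge_mk i j)

def nestedPairs (a : α → ℝ) : Set (α × α) := {p | 0 < a p.1 * a p.2 ∧ |a p.1| < |a p.2|}

theorem axisDrawing_crossings_le [Finite α] [Finite β] (ha : Injective a) (hb : Injective b)
    (ha0 : ∀ i, a i ≠ 0) (hb0 : ∀ j, b j ≠ 0) :
    (axisDrawing ha hb ha0 hb0).crossings ≤ (nestedPairs a).ncard * (nestedPairs b).ncard := by
  let N := nestedPairs a ×ˢ nestedPairs b
  let F : (α × α) × (β × β) → Sym2 (α ⊕ β) × Sym2 (α ⊕ β) := fun q =>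
    (s(inl q.1.1, inr q.2.2), s(inl q.1.2, inr q.2.1))
  calc _ ≤ (F '' N ∪ (Prod.swap ∘ F) '' N).ncard / 2 := by
        refine Drawing.crossings_le_of_subsingleton _ (Set.toFinite _) ?_ ?_ <;>
          rw [edgeSet_completeBipartiteGraph] <;>
          rintro _ ⟨⟨i, j⟩, rfl⟩ _ ⟨⟨i', j'⟩, rfl⟩ hne <;>
          dsimp only at hne ⊢ <;>
          rw [axisDrawing_arc_mk, axisDrawing_arc_mk]
        · exact axisSegment_inter_subsingleton (ha0 i') (hb0 j') (pair_ne_of_mk_ne ha hb hne)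
        · rintro ⟨p, ⟨c, hc, hcp⟩, ⟨c', hc', hcp'⟩⟩
          obtain ⟨haa, hbb, hnest | hnest⟩ := crossed_of_axisSegment_eq (ha0 i) (hb0 j) hc hc'
            (hcp.trans hcp'.symm) (pair_ne_of_mk_ne ha hb hne)
          · exact Or.inl ⟨((i, i'), (j', j)), ⟨⟨haa, hnest.1⟩, by rwa [mul_comm], hnest.2⟩, rfl⟩
          · exact Or.inr ⟨((i', i), (j, j')), ⟨⟨by rwa [mul_comm], hnest.1⟩, hbb, hnest.2⟩, rfl⟩
    _ ≤ (N.ncard + N.ncard) / 2 :=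
        Nat.div_le_div_right ((Set.ncard_union_le _ _).trans
          (add_le_add (Set.ncard_image_le (Set.toFinite _)) (Set.ncard_image_le (Set.toFinite _))))
    _ = _ := by rw [Set.ncard_prod]; omega

end AxisDrawing

def zarankiewiczCoord (k : ℕ) : ℝ := (-1) ^ k * ((k : ℝ) + 1)

theorem abs_zarankiewiczCoord (k : ℕ) : |zarankiewiczCoord k| = k + 1 := by
  rw [zarankiewiczCoord, abs_mul, abs_neg_one_pow, one_mul, abs_of_pos (by positivity)]

theorem zarankiewiczCoord_injective : Function.Injective zarankiewiczCoord := fun k k' h => by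
  simpa [abs_zarankiewiczCoord] using congrArg abs h

theorem zarankiewiczCoord_ne_zero (k : ℕ) : zarankiewiczCoord k ≠ 0 := by
  rw [← abs_pos, abs_zarankiewiczCoord]; positivity

theorem mod_two_eq_of_zarankiewiczCoord_mul_pos {k k' : ℕ}
    (h : 0 < zarankiewiczCoord k * zarankiewiczCoord k') : k % 2 = k' % 2 := by
  have hk : (-1 : ℝ) ^ (k + k') = 1 := by
    rcases neg_one_pow_eq_or ℝ (k + k') with h1 | h1
    · exact h1
    · refine absurd h (not_lt.2 ?_)
      rw [zarankiewiczCoord, zarankiewiczCoord, mul_mul_mul_comm, ← pow_add, h1]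
      nlinarith
  have := (neg_one_pow_eq_one_iff_even (by norm_num)).mp hk
  rw [Nat.even_add, Nat.even_iff, Nat.even_iff] at this
  omega

theorem ncard_nestedPairs_zarankiewiczCoord_le (m : ℕ) :
    (nestedPairs fun k : Fin m => zarankiewiczCoord k).ncard ≤ m / 2 * ((m - 1) / 2) := by
  -- even pairs land on or above the diagonal, odd pairs strictly below it
  let φ : Fin m × Fin m → ℕ × ℕ := fun p =>
    if (p.1 : ℕ) % 2 = 0 then ((p.1 : ℕ) / 2, (p.2 : ℕ) / 2 - 1) else ((p.2 : ℕ) / 2, (p.1 : ℕ) / 2)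
  have hnested {k k' : Fin m} (hp : (k, k') ∈ nestedPairs fun k : Fin m => zarankiewiczCoord k) :
      (k : ℕ) < k' ∧ (k : ℕ) % 2 = (k' : ℕ) % 2 := by
    obtain ⟨hpos, habs⟩ := hp
    rw [abs_zarankiewiczCoord, abs_zarankiewiczCoord] at habs
    exact ⟨by exact_mod_cast (add_lt_add_iff_right 1).mp habs,
      mod_two_eq_of_zarankiewiczCoord_mul_pos hpos⟩
  calc _ ≤ (↑(Finset.range (m / 2) ×ˢ Finset.range ((m - 1) / 2)) : Set (ℕ × ℕ)).ncard := by
        refine Set.ncard_le_ncard_of_injOn φ ?_ ?_ (Finset.finite_toSet _)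
        · rintro ⟨k, k'⟩ hp
          have := hnested hp
          have := k'.isLt
          simp only [φ, Finset.coe_product, Finset.coe_range]
          split_ifs <;> simp only [Set.mem_prod, Set.mem_Iio] <;> omega
        · rintro ⟨k, k'⟩ hp ⟨l, l'⟩ hq hφ
          have := hnested hp
          have := hnested hq
          simp only [φ] at hφ
          split_ifs at hφ <;> simp only [Prod.mk.injEq] at hφ <;>
            simp only [Prod.mk.injEq, Fin.ext_iff] <;> omega
    _ = _ := by rw [Set.ncard_coe_finset, Finset.card_product, Finset.card_range, Finset.card_range]

/-- Zarankiewicz's upper bound for the crossing number of the complete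
bipartite graph `K_{m,n}`. -/
theorem crossingNumber_completeBipartiteGraph_le (m n : ℕ) :
    crossingNumber (completeBipartiteGraph (Fin m) (Fin n)) ≤
      (n / 2) * ((n - 1) / 2) * (m / 2) * ((m - 1) / 2) := by
  have hinj (m : ℕ) : Function.Injective fun k : Fin m => zarankiewiczCoord k :=
    zarankiewiczCoord_injective.comp Fin.val_injective
  calc _ ≤ (axisDrawing (hinj m) (hinj n) (fun _ => zarankiewiczCoord_ne_zero _)
          (fun _ => zarankiewiczCoord_ne_zero _)).crossings := crossingNumber_le_crossings _
    _ ≤ (nestedPairs fun k : Fin m => zarankiewiczCoord k).ncard *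
          (nestedPairs fun k : Fin n => zarankiewiczCoord k).ncard := axisDrawing_crossings_le ..
    _ ≤ (m / 2 * ((m - 1) / 2)) * (n / 2 * ((n - 1) / 2)) :=
        Nat.mul_le_mul (ncard_nestedPairs_zarankiewiczCoord_le m)
          (ncard_nestedPairs_zarankiewiczCoord_le n)
    _ = _ := by ring
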